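/- arXiv:1710.07537 — 3 statements merged into one kernel-verified Lean document; each statement's English description precedes it below -/
import Mathlib

section
/- Let d, k ≥ 1 and let S₁, S₂ ⊂ I^d be closed cubes. Suppose that for all ν₁ ∈ S₁ and ν₂ ∈ S₂ the vectors ∇φ_j(ν₂) − ∇φ_j(ν₁), j = 1,…,k, are linearly independent. Then there is a constant C such that for every R ≥ 1, every ν₁ ∈ S₁ and every ν₂ ∈ S₂, π_{ν₁} ∩ π_{ν₂} ⊂ B(0, C R^{1/2}), where B(0, r) is the ball of radius r centered at the origin of ℝ^{d+k}. -/
open MeasureTheory ENNReal Matrix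

noncomputable section

/-- The extension (adjoint restriction) operator associated to the surface
`ξ ↦ (ξ, Φ ξ)`, acting on functions supported in `S ⊆ I^d`, evaluated at
`w = (x, t) ∈ ℝ^d × ℝ^k`. -/
def extOp (d k : ℕ) (S : Set (Fin d → ℝ)) (Φ : (Fin d → ℝ) → Fin k → ℝ)
    (f : (Fin d → ℝ) → ℂ) (w : (Fin d → ℝ) × (Fin k → ℝ)) : ℂ :=
  ∫ ξ in S, Complex.exp (2 * Real.pi * Complex.I *
    (((∑ i, w.1 i * ξ i) + ∑ j, w.2 j * Φ ξ j : ℝ) : ℂ)) * f ξ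

/-- `S` is a closed cube in `ℝ^d` (an axis-parallel cube `∏ [aᵢ - r, aᵢ + r]`). -/
def IsClosedCube (d : ℕ) (S : Set (Fin d → ℝ)) : Prop :=
  ∃ (a : Fin d → ℝ) (r : ℝ), 0 ≤ r ∧ S = {x | ∀ i, |x i - a i| ≤ r}

/-- The gradient `∇φ(ν)` of a scalar function on `ℝ^d`, as a vector. -/
def gradPhi (d : ℕ) (φ : (Fin d → ℝ) → ℝ) (ν : Fin d → ℝ) : Fin d → ℝ :=
  fun i => fderiv ℝ φ ν (Pi.single i 1)

/-- The Hessian matrix `Hφ(ν)` of a scalar function on `ℝ^d`. -/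
def hessPhi (d : ℕ) (φ : (Fin d → ℝ) → ℝ) (ν : Fin d → ℝ) : Matrix (Fin d) (Fin d) ℝ :=
  Matrix.of fun i j => fderiv ℝ (fun x => fderiv ℝ φ x (Pi.single j 1)) ν (Pi.single i 1)

/-- The `k × d` matrix `D(ν₁, ν₂)` whose `j`-th row is `∇φⱼ(ν₂) - ∇φⱼ(ν₁)`. -/
def Dmat (d k : ℕ) (Φ : (Fin d → ℝ) → Fin k → ℝ) (ν₁ ν₂ : Fin d → ℝ) :
    Matrix (Fin k) (Fin d) ℝ :=
  Matrix.of fun j i => gradPhi d (fun x => Φ x j) ν₂ i - gradPhi d (fun x => Φ x j) ν₁ i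

/-- The matrix `∑ᵢ tᵢ Hφᵢ(ν)`. -/
def tHess (d k : ℕ) (Φ : (Fin d → ℝ) → Fin k → ℝ) (t : Fin k → ℝ) (ν : Fin d → ℝ) :
    Matrix (Fin d) (Fin d) ℝ :=
  ∑ i, t i • hessPhi d (fun x => Φ x i) ν

/-- The `(k+d) × (k+d)` block matrix `M(t, ν₁, ν₂, ν)` with blocks
`0, D(ν₁,ν₂); D(ν₁,ν₂)ᵗ, ∑ᵢ tᵢ Hφᵢ(ν)`. -/
def Mmat (d k : ℕ) (Φ : (Fin d → ℝ) → Fin k → ℝ) (t : Fin k → ℝ) (ν₁ ν₂ ν : Fin d → ℝ) :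
    Matrix (Fin k ⊕ Fin d) (Fin k ⊕ Fin d) ℝ :=
  Matrix.fromBlocks 0 (Dmat d k Φ ν₁ ν₂) (Dmat d k Φ ν₁ ν₂)ᵀ (tHess d k Φ t ν)

/-- The plate `π_ν = {(x,t) : |x + ∑ⱼ tⱼ ∇φⱼ(ν)| ≤ R^{1/2}}` in `ℝ^d × ℝ^k`. -/
def plate (d k : ℕ) (Φ : (Fin d → ℝ) → Fin k → ℝ) (R : ℝ) (ν : Fin d → ℝ) :
    Set ((Fin d → ℝ) × (Fin k → ℝ)) :=
  {w | Real.sqrt (∑ i, (w.1 i + ∑ j, w.2 j * gradPhi d (fun x => Φ x j) ν i) ^ 2) ≤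
    Real.sqrt R}

private def eL (n : ℕ) : (Fin n → ℝ) ≃L[ℝ] EuclideanSpace ℝ (Fin n) :=
  (PiLp.continuousLinearEquiv 2 ℝ (fun _ : Fin n => ℝ)).symm

private lemma eL_apply {n : ℕ} (v : Fin n → ℝ) (i : Fin n) : eL n v i = v i := rfl

private lemma norm_eL {n : ℕ} (v : Fin n → ℝ) :
    ‖eL n v‖ = Real.sqrt (∑ i, v i ^ 2) := by
  rw [EuclideanSpace.norm_eq]
  congr 1
  refine Finset.sum_congr rfl fun i _ => ?_
  rw [eL_apply, Real.norm_eq_abs, sq_abs]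

private lemma abs_le_norm_eL {n : ℕ} (v : Fin n → ℝ) (i : Fin n) : |v i| ≤ ‖eL n v‖ := by
  rw [norm_eL, ← Real.sqrt_sq_eq_abs]
  refine Real.sqrt_le_sqrt ?_
  exact Finset.single_le_sum (f := fun i => v i ^ 2) (fun j _ => sq_nonneg _) (Finset.mem_univ i)

private lemma isCompact_cube {d : ℕ} {S : Set (Fin d → ℝ)} (h : IsClosedCube d S) :
    IsCompact S := by
  obtain ⟨a, r, hr, rfl⟩ := h
  have : {x : Fin d → ℝ | ∀ i, |x i - a i| ≤ r}
      = Set.Icc (fun i => a i - r) (fun i => a i + r) := by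
    ext x
    simp only [Set.mem_setOf_eq, Set.mem_Icc, Pi.le_def, abs_le]
    constructor
    · intro h
      exact ⟨fun i => by linarith [(h i).1], fun i => by linarith [(h i).2]⟩
    · intro h i
      exact ⟨by linarith [h.1 i], by linarith [h.2 i]⟩
  rw [this]
  exact isCompact_Icc

private lemma cube_nonempty {d : ℕ} {S : Set (Fin d → ℝ)} (h : IsClosedCube d S) :
    S.Nonempty := by
  obtain ⟨a, r, hr, rfl⟩ := h
  exact ⟨a, fun i => by simpa using hr⟩

private lemma gradPhi_continuous {d k : ℕ} (Φ : (Fin d → ℝ) → Fin k → ℝ)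
    (hΦ : ContDiff ℝ (⊤ : ℕ∞) Φ) (j : Fin k) (i : Fin d) :
    Continuous fun ν => gradPhi d (fun x => Φ x j) ν i := by
  have hf : ContDiff ℝ (⊤ : ℕ∞) (fun x => Φ x j) := contDiff_pi.mp hΦ j
  exact (hf.continuous_fderiv (by simp)).clm_apply continuous_const

/-- **Lemma (intersection of transversal plates).** If for all `ν₁ ∈ S₁`,
`ν₂ ∈ S₂` the vectors `∇φⱼ(ν₂) - ∇φⱼ(ν₁)`, `1 ≤ j ≤ k`, are linearly
independent, then there is a constant `C` such that for every `R ≥ 1` and all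
`ν₁ ∈ S₁`, `ν₂ ∈ S₂`, `π_{ν₁} ∩ π_{ν₂} ⊆ B(0, C R^{1/2})`. -/
theorem plates_intersection
    (d k : ℕ) (hd : 1 ≤ d) (hk : 1 ≤ k)
    (Φ : (Fin d → ℝ) → Fin k → ℝ) (hΦ : ContDiff ℝ (⊤ : ℕ∞) Φ)
    (S₁ S₂ : Set (Fin d → ℝ))
    (hS₁ : IsClosedCube d S₁) (hS₂ : IsClosedCube d S₂)
    (hS₁I : S₁ ⊆ Set.Icc (-1) 1) (hS₂I : S₂ ⊆ Set.Icc (-1) 1)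
    (hind : ∀ ν₁ ∈ S₁, ∀ ν₂ ∈ S₂,
      LinearIndependent ℝ (fun j : Fin k => Dmat d k Φ ν₁ ν₂ j)) :
    ∃ C : ℝ, ∀ R : ℝ, 1 ≤ R → ∀ ν₁ ∈ S₁, ∀ ν₂ ∈ S₂,
      plate d k Φ R ν₁ ∩ plate d k Φ R ν₂ ⊆
        {w | Real.sqrt ((∑ i, w.1 i ^ 2) + ∑ j, w.2 j ^ 2) ≤ C * Real.sqrt R} := by
  classical
  -- compactness and nonemptiness
  have hcS₁ : IsCompact S₁ := isCompact_cube hS₁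
  have hcS₂ : IsCompact S₂ := isCompact_cube hS₂
  obtain ⟨ν₁₀, hν₁₀⟩ := cube_nonempty hS₁
  obtain ⟨ν₂₀, hν₂₀⟩ := cube_nonempty hS₂
  -- the function F
  set F : ((Fin d → ℝ) × (Fin d → ℝ)) × EuclideanSpace ℝ (Fin k) → ℝ :=
    fun p => ‖eL d (fun i => ∑ j, (eL k).symm p.2 j * Dmat d k Φ p.1.1 p.1.2 j i)‖ with hF
  have hDcont : ∀ (j : Fin k) (i : Fin d),
      Continuous fun p : ((Fin d → ℝ) × (Fin d → ℝ)) × EuclideanSpace ℝ (Fin k) =>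
        Dmat d k Φ p.1.1 p.1.2 j i := by
    intro j i
    have h₂ := (gradPhi_continuous Φ hΦ j i).comp
      (continuous_snd.comp (continuous_fst :
        Continuous fun p : ((Fin d → ℝ) × (Fin d → ℝ)) × EuclideanSpace ℝ (Fin k) => p.1))
    have h₁ := (gradPhi_continuous Φ hΦ j i).comp
      (continuous_fst.comp (continuous_fst :
        Continuous fun p : ((Fin d → ℝ) × (Fin d → ℝ)) × EuclideanSpace ℝ (Fin k) => p.1))
    exact h₂.sub h₁
  have hFcont : Continuous F := by
    refine continuous_norm.comp ((eL d).continuous.comp (continuous_pi fun i => ?_))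
    refine continuous_finset_sum _ fun j _ => Continuous.mul ?_ (hDcont j i)
    exact ((continuous_apply j).comp (eL k).symm.continuous).comp continuous_snd
  -- the compact set
  set K : Set (((Fin d → ℝ) × (Fin d → ℝ)) × EuclideanSpace ℝ (Fin k)) :=
    (S₁ ×ˢ S₂) ×ˢ Metric.sphere (0 : EuclideanSpace ℝ (Fin k)) 1 with hK
  have hKc : IsCompact K := (hcS₁.prod hcS₂).prod (isCompact_sphere 0 1)
  have hKne : K.Nonempty := by
    refine ⟨⟨⟨ν₁₀, ν₂₀⟩, EuclideanSpace.single ⟨0, hk⟩ (1 : ℝ)⟩, ⟨⟨hν₁₀, hν₂₀⟩, ?_⟩⟩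
    simp [EuclideanSpace.norm_single]
  obtain ⟨p₀, hp₀K, hp₀min⟩ := hKc.exists_isMinOn hKne hFcont.continuousOn
  set ε : ℝ := F p₀ with hεdef
  have hε : 0 < ε := by
    rcases hp₀K with ⟨⟨h1, h2⟩, h3⟩
    have hεnn : 0 ≤ ε := norm_nonneg _
    rcases hεnn.lt_or_eq with h | h
    · exact h
    exfalso
    have h0 : (fun i => ∑ j, (eL k).symm p₀.2 j * Dmat d k Φ p₀.1.1 p₀.1.2 j i)
        = (0 : Fin d → ℝ) := by
      have := norm_eq_zero.mp h.symm
      have := congrArg (eL d).symm this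
      simpa using this
    have hli := hind p₀.1.1 h1 p₀.1.2 h2
    have hall := (Fintype.linearIndependent_iff.mp hli) ((eL k).symm p₀.2) ?_
    · have : p₀.2 = 0 := by
        have : (eL k).symm p₀.2 = 0 := funext hall
        have := congrArg (eL k) this
        simpa using this
      rw [this] at h3
      simp at h3
    · funext i
      have := congrFun h0 i
      simpa [Finset.sum_apply] using this
  -- the scaling inequality
  have key : ∀ ν₁ ∈ S₁, ∀ ν₂ ∈ S₂, ∀ t : Fin k → ℝ,
      ε * ‖eL k t‖ ≤ ‖eL d (fun i => ∑ j, t j * Dmat d k Φ ν₁ ν₂ j i)‖ := by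
    intro ν₁ h₁ ν₂ h₂ t
    rcases eq_or_ne t 0 with rfl | ht
    · simp
    have hs : (0 : ℝ) < ‖eL k t‖ := by
      rw [norm_pos_iff]
      simpa using ht
    set s : ℝ := ‖eL k t‖ with hsdef
    set u : EuclideanSpace ℝ (Fin k) := s⁻¹ • eL k t with hu
    have huK : (⟨⟨ν₁, ν₂⟩, u⟩ : ((Fin d → ℝ) × (Fin d → ℝ)) × EuclideanSpace ℝ (Fin k)) ∈ K := by
      refine ⟨⟨h₁, h₂⟩, ?_⟩
      simp only [mem_sphere_iff_norm, sub_zero, hu, norm_smul, norm_inv, Real.norm_eq_abs,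
        abs_of_pos hs]
      field_simp
      exact hsdef.symm
    have hmin := hp₀min huK
    have hueq : (eL k).symm u = s⁻¹ • t := by
      rw [hu, _root_.map_smul]
      simp
    have hvec : (fun i => ∑ j, ((eL k).symm u) j * Dmat d k Φ ν₁ ν₂ j i)
        = s⁻¹ • fun i => ∑ j, t j * Dmat d k Φ ν₁ ν₂ j i := by
      funext i
      rw [hueq]
      simp only [Pi.smul_apply, smul_eq_mul, Finset.mul_sum]
      exact Finset.sum_congr rfl fun j _ => by ring
    have : ε ≤ s⁻¹ * ‖eL d (fun i => ∑ j, t j * Dmat d k Φ ν₁ ν₂ j i)‖ := by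
      calc ε ≤ F ⟨⟨ν₁, ν₂⟩, u⟩ := hmin
        _ = s⁻¹ * ‖eL d (fun i => ∑ j, t j * Dmat d k Φ ν₁ ν₂ j i)‖ := by
            rw [hF]
            simp only [hvec, _root_.map_smul, norm_smul, norm_inv, Real.norm_eq_abs, abs_of_pos hs]
    calc ε * s = s * ε := mul_comm _ _
      _ ≤ s * (s⁻¹ * ‖eL d (fun i => ∑ j, t j * Dmat d k Φ ν₁ ν₂ j i)‖) := by
          exact mul_le_mul_of_nonneg_left this hs.le
      _ = ‖eL d (fun i => ∑ j, t j * Dmat d k Φ ν₁ ν₂ j i)‖ := by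
          field_simp
  -- bound on the gradients over S₁
  set G : (Fin d → ℝ) → ℝ :=
    fun ν => ∑ j : Fin k, ‖eL d (fun i => gradPhi d (fun x => Φ x j) ν i)‖ with hG
  have hGcont : Continuous G := by
    refine continuous_finset_sum _ fun j _ => continuous_norm.comp ?_
    exact (eL d).continuous.comp (continuous_pi fun i => gradPhi_continuous Φ hΦ j i)
  obtain ⟨νB, hνB, hBmax⟩ := hcS₁.exists_isMaxOn ⟨ν₁₀, hν₁₀⟩ hGcont.continuousOn
  set B : ℝ := G νB with hB
  have hB0 : 0 ≤ B := Finset.sum_nonneg fun j _ => norm_nonneg _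
  -- the constant
  refine ⟨1 + 2 / ε * B + 2 / ε, ?_⟩
  intro R hR ν₁ h₁ ν₂ h₂ w hw
  obtain ⟨hw₁, hw₂⟩ := hw
  set x : Fin d → ℝ := w.1 with hx
  set t : Fin k → ℝ := w.2 with ht
  set v₁ : Fin d → ℝ := fun i => x i + ∑ j, t j * gradPhi d (fun x => Φ x j) ν₁ i with hv₁
  set v₂ : Fin d → ℝ := fun i => x i + ∑ j, t j * gradPhi d (fun x => Φ x j) ν₂ i with hv₂
  have hRnn : (0 : ℝ) ≤ Real.sqrt R := Real.sqrt_nonneg R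
  have hn₁ : ‖eL d v₁‖ ≤ Real.sqrt R := by rw [norm_eL]; exact hw₁
  have hn₂ : ‖eL d v₂‖ ≤ Real.sqrt R := by rw [norm_eL]; exact hw₂
  have hDt : (fun i => ∑ j, t j * Dmat d k Φ ν₁ ν₂ j i) = v₂ - v₁ := by
    funext i
    simp only [Dmat, Matrix.of_apply, Pi.sub_apply, hv₁, hv₂, mul_sub, Finset.sum_sub_distrib]
    ring
  have hDtnorm : ‖eL d (fun i => ∑ j, t j * Dmat d k Φ ν₁ ν₂ j i)‖ ≤ 2 * Real.sqrt R := by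
    rw [hDt, _root_.map_sub]
    calc ‖eL d v₂ - eL d v₁‖ ≤ ‖eL d v₂‖ + ‖eL d v₁‖ := norm_sub_le _ _
      _ ≤ 2 * Real.sqrt R := by linarith
  have hT : ‖eL k t‖ ≤ 2 / ε * Real.sqrt R := by
    have := (key ν₁ h₁ ν₂ h₂ t).trans hDtnorm
    rw [div_mul_eq_mul_div, le_div_iff₀ hε]
    linarith [this]
  -- bound |x|
  have hsum : ‖eL d (fun i => ∑ j, t j * gradPhi d (fun x => Φ x j) ν₁ i)‖
      ≤ ‖eL k t‖ * B := by
    have heq : (fun i => ∑ j, t j * gradPhi d (fun x => Φ x j) ν₁ i)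
        = ∑ j, t j • fun i => gradPhi d (fun x => Φ x j) ν₁ i := by
      funext i
      simp [Finset.sum_apply]
    rw [heq, _root_.map_sum]
    calc ‖∑ j, eL d (t j • fun i => gradPhi d (fun x => Φ x j) ν₁ i)‖
        ≤ ∑ j, ‖eL d (t j • fun i => gradPhi d (fun x => Φ x j) ν₁ i)‖ :=
          norm_sum_le _ _
      _ = ∑ j, |t j| * ‖eL d (fun i => gradPhi d (fun x => Φ x j) ν₁ i)‖ := by
          refine Finset.sum_congr rfl fun j _ => ?_
          rw [_root_.map_smul, norm_smul, Real.norm_eq_abs]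
      _ ≤ ∑ j, ‖eL k t‖ * ‖eL d (fun i => gradPhi d (fun x => Φ x j) ν₁ i)‖ := by
          refine Finset.sum_le_sum fun j _ => ?_
          exact mul_le_mul_of_nonneg_right (abs_le_norm_eL t j) (norm_nonneg _)
      _ = ‖eL k t‖ * G ν₁ := by rw [hG, Finset.mul_sum]
      _ ≤ ‖eL k t‖ * B := mul_le_mul_of_nonneg_left (hBmax h₁) (norm_nonneg _)
  have hxbound : ‖eL d x‖ ≤ Real.sqrt R + ‖eL k t‖ * B := by
    have hxeq : x = v₁ - fun i => ∑ j, t j * gradPhi d (fun x => Φ x j) ν₁ i := by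
      funext i
      simp [hv₁]
    calc ‖eL d x‖
        = ‖eL d v₁ - eL d (fun i => ∑ j, t j * gradPhi d (fun x => Φ x j) ν₁ i)‖ := by
          rw [hxeq, _root_.map_sub]
      _ ≤ ‖eL d v₁‖ + ‖eL d (fun i => ∑ j, t j * gradPhi d (fun x => Φ x j) ν₁ i)‖ :=
          norm_sub_le _ _
      _ ≤ Real.sqrt R + ‖eL k t‖ * B := add_le_add hn₁ hsum
  -- conclude
  show Real.sqrt ((∑ i, x i ^ 2) + ∑ j, t j ^ 2) ≤ _
  have hxs : (∑ i, x i ^ 2) = ‖eL d x‖ ^ 2 := by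
    rw [norm_eL, Real.sq_sqrt]
    exact Finset.sum_nonneg fun i _ => sq_nonneg _
  have hts : (∑ j, t j ^ 2) = ‖eL k t‖ ^ 2 := by
    rw [norm_eL, Real.sq_sqrt]
    exact Finset.sum_nonneg fun j _ => sq_nonneg _
  have htri : Real.sqrt ((∑ i, x i ^ 2) + ∑ j, t j ^ 2) ≤ ‖eL d x‖ + ‖eL k t‖ := by
    rw [hxs, hts]
    have h1 : ‖eL d x‖ ^ 2 + ‖eL k t‖ ^ 2 ≤ (‖eL d x‖ + ‖eL k t‖) ^ 2 := by
      nlinarith [norm_nonneg (eL d x), norm_nonneg (eL k t)]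
    calc Real.sqrt (‖eL d x‖ ^ 2 + ‖eL k t‖ ^ 2)
        ≤ Real.sqrt ((‖eL d x‖ + ‖eL k t‖) ^ 2) := Real.sqrt_le_sqrt h1
      _ = ‖eL d x‖ + ‖eL k t‖ := Real.sqrt_sq (by positivity)
  have hnormt : ‖eL k t‖ ≤ 2 / ε * Real.sqrt R := hT
  calc Real.sqrt ((∑ i, x i ^ 2) + ∑ j, t j ^ 2)
      ≤ ‖eL d x‖ + ‖eL k t‖ := htri
    _ ≤ (Real.sqrt R + ‖eL k t‖ * B) + 2 / ε * Real.sqrt R := add_le_add hxbound hnormt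
    _ ≤ (Real.sqrt R + (2 / ε * Real.sqrt R) * B) + 2 / ε * Real.sqrt R := by
        have := mul_le_mul_of_nonneg_right hnormt hB0
        linarith
    _ = (1 + 2 / ε * B + 2 / ε) * Real.sqrt R := by ring

end
end

section
/- Let d ≥ k ≥ 1, let H be an invertible real symmetric d×d matrix, let D be a k×d real matrix with det(D H^{−1} D^t) ≠ 0, and let V be a (d−k)×d real matrix whose rows are orthonormal and which satisfies V D^t = 0. Then the d×d matrix whose first d−k rows are the rows of the matrix VH and whose last k rows are the rows of D has nonzero determinant. -/
/-!
Multiplying the stacked matrix `[V H; D]` on the right by `H⁻¹ [Vᵀ Dᵀ]` gives the block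
lower-triangular matrix `[1, 0; D H⁻¹ Vᵀ, D H⁻¹ Dᵀ]`, because `V Vᵀ = 1` and `V Dᵀ = 0`.
Its determinant is `det (D H⁻¹ Dᵀ) ≠ 0`, so the stacked matrix cannot be singular.
-/

open Matrix

noncomputable section

/-- The canonical index bijection `Fin (d-k) ⊕ Fin k ≃ Fin d` for `k ≤ d`. -/
def sumEquiv (d k : ℕ) (hdk : k ≤ d) : (Fin (d - k) ⊕ Fin k) ≃ Fin d :=
  finSumFinEquiv.trans (finCongr (Nat.sub_add_cancel hdk))

namespace Matrix

variable {R : Type*} [CommRing R] {m n p : Type*} [Fintype m] [DecidableEq m] [Fintype n]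

theorem det_submatrix_ne_zero_of_det_mul_ne_zero (M : Matrix m n R) (N : Matrix n m R)
    (e : m ≃ n) (h : (M * N).det ≠ 0) : (M.submatrix id e).det ≠ 0 := by
  rw [← submatrix_id_id (M * N), ← submatrix_mul_equiv M N id e id, det_mul] at h
  exact left_ne_zero_of_mul h

variable [DecidableEq n] [Fintype p] [DecidableEq p]

theorem det_fromRows_mul_inv_mul_transpose {H : Matrix n n R} (hH : IsUnit H.det)
    {V : Matrix m n R} {D : Matrix p n R} (hV : V * Vᵀ = 1) (hVD : V * Dᵀ = 0) :
    (fromRows (V * H) D * (H⁻¹ * (fromRows V D)ᵀ)).det = (D * H⁻¹ * Dᵀ).det := by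
  have hVH : V * H * H⁻¹ = V := by rw [Matrix.mul_assoc, mul_nonsing_inv H hH, Matrix.mul_one]
  have hblock : fromRows (V * H) D * (H⁻¹ * (fromRows V D)ᵀ)
      = fromBlocks 1 0 (D * H⁻¹ * Vᵀ) (D * H⁻¹ * Dᵀ) := by
    rw [← Matrix.mul_assoc, fromRows_mul, hVH, transpose_fromRows, fromRows_mul_fromCols,
      hV, hVD]
  rw [hblock, det_fromBlocks_zero₁₂, det_one, one_mul]

end Matrix

theorem stacked_matrix_det_ne_zero_general
    (d k : ℕ) (hdk : k ≤ d)
    (H : Matrix (Fin d) (Fin d) ℝ) (hHinv : IsUnit H.det)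
    (D : Matrix (Fin k) (Fin d) ℝ) (hD : (D * H⁻¹ * Dᵀ).det ≠ 0)
    (V : Matrix (Fin (d - k)) (Fin d) ℝ) (hV : V * Vᵀ = 1) (hVD : V * Dᵀ = 0) :
    ((Matrix.fromRows (V * H) D).submatrix (id : Fin (d - k) ⊕ Fin k → _)
        (sumEquiv d k hdk)).det ≠ 0 :=
  det_submatrix_ne_zero_of_det_mul_ne_zero _ (H⁻¹ * (fromRows V D)ᵀ) _
    (det_fromRows_mul_inv_mul_transpose hHinv hV hVD ▸ hD)

/-- **Lemma (transversality, linear algebra form).** Let `H` be an invertible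
real symmetric `d × d` matrix, `D` a `k × d` matrix with
`det (D H⁻¹ Dᵀ) ≠ 0`, and `V` a `(d-k) × d` matrix with orthonormal rows
(`V Vᵀ = 1`) satisfying `V Dᵀ = 0`. Then the `d × d` matrix whose first `d-k`
rows are the rows of `V H` and whose last `k` rows are the rows of `D` has
nonzero determinant. -/
theorem stacked_matrix_det_ne_zero
    (d k : ℕ) (hdk : k ≤ d) (hk : 1 ≤ k)
    (H : Matrix (Fin d) (Fin d) ℝ) (hHsymm : H.IsSymm) (hHinv : IsUnit H.det)
    (D : Matrix (Fin k) (Fin d) ℝ) (hD : (D * H⁻¹ * Dᵀ).det ≠ 0)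
    (V : Matrix (Fin (d - k)) (Fin d) ℝ) (hV : V * Vᵀ = 1) (hVD : V * Dᵀ = 0) :
    ((Matrix.fromRows (V * H) D).submatrix (id : Fin (d - k) ⊕ Fin k → _)
        (sumEquiv d k hdk)).det ≠ 0 :=
  stacked_matrix_det_ne_zero_general d k hdk H hHinv D hD V hV hVD

end
end

section
/- Let d ≥ k ≥ 1, let H be a d×d real matrix with det H ≠ 0, let N be a (d−k)×d real matrix and D a k×d real matrix such that N D^t = 0 and the d×d matrix whose first d−k columns are the columns of N^t and whose last k columns are the columns of D^t is nonsingular. Then det(N H N^t) ≠ 0 if and only if det(D H^{−1} D^t) ≠ 0. -/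
/-!
Put `G = [Nᵀ | Dᵀ]`. Since `N Dᵀ = 0`, the matrix `S = Gᵀ G` is block diagonal with blocks
`N Nᵀ` and `D Dᵀ`, and it is invertible because `G` is; moreover `G S⁻¹ Gᵀ = 1`. Hence
`X = Gᵀ H G` and `T = S⁻¹ Gᵀ H⁻¹ G` satisfy `X T = S`, so `X` is invertible, `X₁₁ = N H Nᵀ` and
`T₂₂ = (D Dᵀ)⁻¹ D H⁻¹ Dᵀ`. Jacobi's complementary minor identity applied to `X T = S` gives
`det X · det T₂₂ = det (N H Nᵀ) · det (D Dᵀ)`.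
-/

open Matrix

noncomputable section

namespace Matrix

section CommRing
variable {R : Type*} [CommRing R]

theorem det_transpose_mul_self_eq_sq {ι κ : Type*} [Fintype ι] [Fintype κ] [DecidableEq ι]
    [DecidableEq κ] (G : Matrix ι κ R) (e : ι ≃ κ) :
    (Gᵀ * G).det = (G.submatrix id e).det ^ 2 := by
  rw [← det_submatrix_equiv_self e, ← submatrix_mul_equiv _ _ _ (Equiv.refl ι), det_mul,
    ← transpose_submatrix, det_transpose, sq]
  rfl

theorem mul_inv_transpose_mul_self_mul_transpose {ι κ : Type*} [Fintype ι] [Fintype κ]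
    [DecidableEq ι] [DecidableEq κ] (G : Matrix ι κ R) (e : ι ≃ κ)
    (hG : IsUnit (Gᵀ * G).det) : G * (Gᵀ * G)⁻¹ * Gᵀ = 1 := by
  rw [Matrix.mul_assoc, mul_eq_one_comm_of_equiv e, Matrix.mul_assoc, nonsing_inv_mul _ hG]

theorem transpose_fromCols_mul_mul_fromCols {ι m n : Type*} [Fintype ι] (N : Matrix m ι R)
    (D : Matrix n ι R) (H : Matrix ι ι R) :
    (fromCols Nᵀ Dᵀ)ᵀ * H * fromCols Nᵀ Dᵀ =
      fromBlocks (N * H * Nᵀ) (N * H * Dᵀ) (D * H * Nᵀ) (D * H * Dᵀ) := by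
  rw [transpose_fromCols, transpose_transpose, transpose_transpose, fromRows_mul,
    fromRows_mul_fromCols]

/-- Jacobi's complementary minor identity `det X * det (X⁻¹)₂₂ = det X₁₁`, in an inverse-free
form (take `T = X⁻¹`). -/
theorem det_mul_det_toBlocks₂₂_of_toBlocks₁₂_mul_eq_zero {m n : Type*} [Fintype m] [Fintype n]
    [DecidableEq m] [DecidableEq n] (X T : Matrix (m ⊕ n) (m ⊕ n) R)
    (h : (X * T).toBlocks₁₂ = 0) :
    X.det * T.toBlocks₂₂.det = X.toBlocks₁₁.det * (X * T).toBlocks₂₂.det := by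
  have hblock : X * fromBlocks 1 T.toBlocks₁₂ 0 T.toBlocks₂₂ =
      fromBlocks X.toBlocks₁₁ 0 X.toBlocks₂₁ (X * T).toBlocks₂₂ := by
    rw [← h, ← fromBlocks_toBlocks X, ← fromBlocks_toBlocks T]
    simp [fromBlocks_multiply]
  simpa [det_fromBlocks_zero₂₁, det_fromBlocks_zero₁₂] using congrArg det hblock

end CommRing

variable {K : Type*} [Field K] {ι m n : Type*} [Fintype ι] [Fintype m] [Fintype n]
  [DecidableEq ι] [DecidableEq m] [DecidableEq n]

theorem det_toBlocks₁₁_transpose_mul_mul_ne_zero_iff (G : Matrix ι (m ⊕ n) K) (e : ι ≃ m ⊕ n)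
    (hG : (G.submatrix id e).det ≠ 0) {A : Matrix m m K} {B : Matrix n n K}
    (hS : Gᵀ * G = fromBlocks A 0 0 B) {H : Matrix ι ι K} (hH : H.det ≠ 0) :
    (Gᵀ * H * G).toBlocks₁₁.det ≠ 0 ↔ (Gᵀ * H⁻¹ * G).toBlocks₂₂.det ≠ 0 := by
  have hSdet : (Gᵀ * G).det ≠ 0 := by
    rw [det_transpose_mul_self_eq_sq G e]; exact pow_ne_zero 2 hG
  obtain ⟨hA, hB⟩ : A.det ≠ 0 ∧ B.det ≠ 0 := by
    rwa [hS, det_fromBlocks_zero₂₁, mul_ne_zero_iff] at hSdet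
  have hSinv : (Gᵀ * G)⁻¹ = fromBlocks A⁻¹ 0 0 B⁻¹ := by
    rw [hS, inv_fromBlocks_zero₁₂_of_isUnit_iff]
    · simp
    · simp [isUnit_iff_isUnit_det, hA, hB]
  set X := Gᵀ * H * G
  set T := (Gᵀ * G)⁻¹ * (Gᵀ * H⁻¹ * G) with hT
  have hXT : X * T = Gᵀ * G := by
    have hproj := mul_inv_transpose_mul_self_mul_transpose G e hSdet.isUnit
    calc X * T = Gᵀ * H * (G * (Gᵀ * G)⁻¹ * Gᵀ) * H⁻¹ * G := by
          simp only [X, T, Matrix.mul_assoc]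
      _ = Gᵀ * G := by rw [hproj, Matrix.mul_one, mul_nonsing_inv_cancel_right _ _ hH.isUnit]
  have hX : X.det ≠ 0 := left_ne_zero_of_mul (by rwa [← det_mul, hXT])
  have hT₂₂ : T.toBlocks₂₂ = B⁻¹ * (Gᵀ * H⁻¹ * G).toBlocks₂₂ := by
    rw [hT, hSinv, ← fromBlocks_toBlocks (Gᵀ * H⁻¹ * G), fromBlocks_multiply]
    simp
  have key := det_mul_det_toBlocks₂₂_of_toBlocks₁₂_mul_eq_zero X T (by rw [hXT, hS]; rfl)
  rw [hT₂₂, hXT, hS, toBlocks_fromBlocks₂₂, det_mul, det_nonsing_inv,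
    Ring.inverse_eq_inv'] at key
  rw [eq_div_of_mul_eq hB key.symm]
  simp [hX, hB]

end Matrix

theorem det_NHNt_ne_zero_iff_det_DHinvDt_ne_zero_general
    (d k : ℕ) (hdk : k ≤ d)
    (H : Matrix (Fin d) (Fin d) ℝ) (hH : H.det ≠ 0)
    (N : Matrix (Fin (d - k)) (Fin d) ℝ) (D : Matrix (Fin k) (Fin d) ℝ)
    (hND : N * Dᵀ = 0)
    (hfull : ((Matrix.fromCols Nᵀ Dᵀ).submatrix (id : Fin d → Fin d)
      (sumEquiv d k hdk).symm).det ≠ 0) :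
    (N * H * Nᵀ).det ≠ 0 ↔ (D * H⁻¹ * Dᵀ).det ≠ 0 := by
  have hDN : D * Nᵀ = 0 := by simpa using congrArg transpose hND
  have hblocks := transpose_fromCols_mul_mul_fromCols N D
  have hS : (fromCols Nᵀ Dᵀ)ᵀ * fromCols Nᵀ Dᵀ = fromBlocks (N * Nᵀ) 0 0 (D * Dᵀ) := by
    simpa [hND, hDN] using hblocks 1
  have key := det_toBlocks₁₁_transpose_mul_mul_ne_zero_iff _ _ hfull hS hH
  rwa [hblocks, hblocks, toBlocks_fromBlocks₁₁, toBlocks_fromBlocks₂₂] at key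

/-- **Lemma (equivalence of the two curvature conditions).** Let `H` be a
`d × d` matrix with `det H ≠ 0`, `N` a `(d-k) × d` matrix and `D` a `k × d`
matrix with `N Dᵀ = 0`, such that the `d × d` matrix with columns
`[Nᵀ | Dᵀ]` is nonsingular. Then `det (N H Nᵀ) ≠ 0` if and only if
`det (D H⁻¹ Dᵀ) ≠ 0`. -/
theorem det_NHNt_ne_zero_iff_det_DHinvDt_ne_zero
    (d k : ℕ) (hdk : k ≤ d) (hk : 1 ≤ k)
    (H : Matrix (Fin d) (Fin d) ℝ) (hH : H.det ≠ 0)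
    (N : Matrix (Fin (d - k)) (Fin d) ℝ) (D : Matrix (Fin k) (Fin d) ℝ)
    (hND : N * Dᵀ = 0)
    (hfull : ((Matrix.fromCols Nᵀ Dᵀ).submatrix (id : Fin d → Fin d)
      (sumEquiv d k hdk).symm).det ≠ 0) :
    (N * H * Nᵀ).det ≠ 0 ↔ (D * H⁻¹ * Dᵀ).det ≠ 0 :=
  det_NHNt_ne_zero_iff_det_DHinvDt_ne_zero_general d k hdk H hH N D hND hfull

end
end
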